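/- Every spherical convex body of constant width w < π/2 on S² is a reduced body, i.e., every proper convex subbody has strictly smaller thickness. -/

import Mathlib

open scoped InnerProductSpace

noncomputable section

abbrev E3 := EuclideanSpace ℝ (Fin 3)

/-- The unit sphere S² in E³. -/
def S2 : Set E3 := Metric.sphere 0 1

/-- Spherical (geodesic) distance on the unit sphere. -/
def sdist (x y : E3) : ℝ := Real.arccos ⟪x, y⟫_ℝ

/-- The shorter great-circle arc joining `a` and `b`. -/
def arc (a b : E3) : Set E3 := {x | x ∈ S2 ∧ sdist a x + sdist x b = sdist a b}

/-- Spherical convexity. -/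
def SphConvex (A : Set E3) : Prop :=
  A ⊆ S2 ∧ (∀ x ∈ A, -x ∉ A) ∧ ∀ a ∈ A, ∀ b ∈ A, arc a b ⊆ A

/-- Closed hemisphere with center `c`. -/
def hemi (c : E3) : Set E3 := {x ∈ S2 | sdist c x ≤ Real.pi / 2}

/-- Open hemisphere with center `c`. -/
def openHemi (c : E3) : Set E3 := {x ∈ S2 | sdist c x < Real.pi / 2}

/-- Boundary of `A` relative to the sphere. -/
def relBoundary (A : Set E3) : Set E3 :=
  {p ∈ S2 | ∀ r > 0, (Metric.ball p r ∩ S2 ∩ A).Nonempty ∧ ((Metric.ball p r ∩ S2) \ A).Nonempty}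

/-- `A` has nonempty interior relative to the sphere. -/
def relIntNonempty (A : Set E3) : Prop := ∃ p ∈ S2, ∃ r > 0, Metric.ball p r ∩ S2 ⊆ A

/-- A spherical convex body. -/
def SphConvexBody (A : Set E3) : Prop := IsClosed A ∧ SphConvex A ∧ relIntNonempty A

/-- The hemisphere centered at `c` supports `A`. -/
def Supports (c : E3) (A : Set E3) : Prop :=
  c ∈ S2 ∧ A ⊆ hemi c ∧ ∃ p ∈ A, sdist c p = Real.pi / 2

/-- The hemisphere centered at `c` supports `A` at the point `p`. -/
def SupportsAt (c : E3) (A : Set E3) (p : E3) : Prop :=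
  c ∈ S2 ∧ A ⊆ hemi c ∧ p ∈ A ∧ sdist c p = Real.pi / 2

/-- `hemi g` and `hemi h` form a lune: distinct hemispheres with non-antipodal centers. -/
def IsLunePair (g h : E3) : Prop := g ∈ S2 ∧ h ∈ S2 ∧ g ≠ h ∧ g ≠ -h

/-- The center (midpoint) of the semicircle `G/H ⊆ bd(hemi g)` bounding the lune
`hemi g ∩ hemi h`: the point of the great circle `bd(hemi g)` nearest to `h`. -/
def scCenter (g h : E3) : E3 := ‖h - ⟪h, g⟫_ℝ • g‖⁻¹ • (h - ⟪h, g⟫_ℝ • g)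

/-- Thickness of the lune `hemi g ∩ hemi h`: the spherical distance between the
centers of its two bounding semicircles. -/
def luneTh (g h : E3) : ℝ := sdist (scCenter g h) (scCenter h g)

/-- The width of `A` determined by the supporting hemisphere centered at `c`:
the minimal thickness of a lune `K ∩ K*` with `K*` supporting `A`. -/
def widthAt (c : E3) (A : Set E3) : ℝ :=
  sInf {t | ∃ c', Supports c' A ∧ IsLunePair c c' ∧ t = luneTh c c'}

/-- The thickness of `A`: the minimum of `widthAt` over supporting hemispheres. -/
def thickness (A : Set E3) : ℝ :=
  sInf {t | ∃ c, Supports c A ∧ t = widthAt c A}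

/-- `A` is of constant width `w`. -/
def ConstWidth (A : Set E3) (w : ℝ) : Prop := ∀ c, Supports c A → widthAt c A = w

/-- A reduced spherical convex body. -/
def Reduced (R : Set E3) : Prop :=
  SphConvexBody R ∧ ∀ Z, SphConvexBody Z → Z ⊆ R → Z ≠ R → thickness Z < thickness R

/-- Cross product in E³. -/
def cross (u v : E3) : E3 :=
  (WithLp.equiv 2 (Fin 3 → ℝ)).symm
    ![u 1 * v 2 - u 2 * v 1, u 2 * v 0 - u 0 * v 2, u 0 * v 1 - u 1 * v 0]

/-- Orientation determinant of a triple of vectors in E³. -/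
def det3 (u v w : E3) : ℝ := ⟪cross u v, w⟫_ℝ

/-- `m` lies strictly between `m₁` and `m₂` in counterclockwise order
(positively oriented triple): the relation `≺ M₁ M M₂`. -/
def CCWBetween (m₁ m m₂ : E3) : Prop := 0 < det3 m₁ m m₂

/-- `c` is the center of the right supporting hemisphere of `A` at `p`. -/
def RightSupport (c : E3) (A : Set E3) (p : E3) : Prop :=
  SupportsAt c A p ∧ ∀ c', SupportsAt c' A p → 0 ≤ ⟪c', cross p c⟫_ℝ

/-- `c` is the center of the left supporting hemisphere of `A` at `p`. -/
def LeftSupport (c : E3) (A : Set E3) (p : E3) : Prop :=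
  SupportsAt c A p ∧ ∀ c', SupportsAt c' A p → ⟪c', cross p c⟫_ℝ ≤ 0

/-- Spherical angle at vertex `b` of the triangle `a b c`. -/
def sAngle (a b c : E3) : ℝ :=
  InnerProductGeometry.angle (a - ⟪a, b⟫_ℝ • b) (c - ⟪c, b⟫_ℝ • b)

/-- Spherical convex hull. -/
def sconvHull (A : Set E3) : Set E3 := ⋂₀ {B | A ⊆ B ∧ SphConvex B}

/-- Distance from a point to a set, in the spherical metric. -/
def sInfDist (x : E3) (A : Set E3) : ℝ := sInf (sdist x '' A)

/-- Hausdorff distance with respect to the spherical metric. -/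
def sHD (A B : Set E3) : ℝ :=
  max (sSup ((fun a => sInfDist a B) '' A)) (sSup ((fun b => sInfDist b A) '' B))

/-! The body `W` has diameter at most `w`: if `p ∈ W` is farthest from `q ∈ W`, the hemisphere
supporting `W` at `p` orthogonally to the arc `pq` gives width at least `min (sdist p q) (π / 2)`.
Now let `Z ⊊ W` and `x ∈ W \ Z`. Support `Z` at its point nearest to `x` by a hemisphere with
centre `c`. Then `c` is more than `π / 2` away from `x`, which is within `w` of all of `Z`, so `c`
is more than `π / 2 - w` away from `Z`. The hemisphere supporting `Z` at its point nearest to `c`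
forms with `hemi c` a lune of thickness `π / 2 - sdist c Z < w`. -/

open Real InnerProductGeometry

lemma mem_S2 {x : E3} : x ∈ S2 ↔ ‖x‖ = 1 := mem_sphere_zero_iff_norm

lemma neg_mem_S2 {x : E3} (hx : x ∈ S2) : -x ∈ S2 := by
  rw [mem_S2, norm_neg, ← mem_S2]; exact hx

section UnitVectors

variable {a b c : E3}

lemma cos_sdist (ha : ‖a‖ = 1) (hb : ‖b‖ = 1) : cos (sdist a b) = ⟪a, b⟫_ℝ :=
  cos_arccos (neg_one_le_real_inner_of_norm_eq_one ha hb) (real_inner_le_one_of_norm_eq_one ha hb)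

lemma sdist_nonneg : 0 ≤ sdist a b := arccos_nonneg _

lemma sdist_le_pi : sdist a b ≤ π := arccos_le_pi _

lemma sdist_comm (a b : E3) : sdist a b = sdist b a := by
  rw [sdist, sdist, real_inner_comm]

lemma sdist_self (ha : ‖a‖ = 1) : sdist a a = 0 := by
  rw [sdist, real_inner_self_eq_norm_sq, ha, one_pow, arccos_one]

lemma sdist_neg_right (a b : E3) : sdist a (-b) = π - sdist a b := by
  rw [sdist, sdist, inner_neg_right, arccos_neg]

lemma sdist_le_pi_div_two_iff : sdist a b ≤ π / 2 ↔ 0 ≤ ⟪a, b⟫_ℝ := arccos_le_pi_div_two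

lemma pi_div_two_lt_sdist_iff : π / 2 < sdist a b ↔ ⟪a, b⟫_ℝ < 0 := by
  rw [← not_le, sdist_le_pi_div_two_iff, not_le]

lemma sdist_eq_pi_div_two_iff : sdist a b = π / 2 ↔ ⟪a, b⟫_ℝ = 0 := arccos_eq_pi_div_two

lemma sdist_eq_angle (ha : ‖a‖ = 1) (hb : ‖b‖ = 1) : sdist a b = angle a b := by
  simp [sdist, angle, ha, hb]

lemma sdist_triangle (ha : ‖a‖ = 1) (hb : ‖b‖ = 1) (hc : ‖c‖ = 1) :
    sdist a c ≤ sdist a b + sdist b c := by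
  simpa only [sdist_eq_angle, ha, hb, hc] using angle_le_angle_add_angle a b c

lemma sin_sdist_pos (ha : ‖a‖ = 1) (hb : ‖b‖ = 1) (h₁ : b ≠ a) (h₂ : b ≠ -a) :
    0 < sin (sdist a b) := by
  refine sin_pos_of_pos_of_lt_pi (arccos_pos.2 ?_) (arccos_lt_pi.2 ?_)
  · exact (real_inner_le_one_of_norm_eq_one ha hb).lt_of_ne
      fun h => h₁ ((inner_eq_one_iff_of_norm_eq_one ha hb).1 h).symm
  · refine (neg_one_le_real_inner_of_norm_eq_one ha hb).lt_of_ne fun h => h₂ ?_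
    rw [(inner_eq_neg_one_iff_of_norm_eq_one ha hb).1 h.symm, neg_neg]

lemma mem_hemi_iff {x : E3} : x ∈ hemi c ↔ x ∈ S2 ∧ 0 ≤ ⟪c, x⟫_ℝ := by
  rw [hemi, Set.mem_ofPred_eq, sdist_le_pi_div_two_iff]

end UnitVectors

/- `scCenter a b` is the unit tangent at `a` of the arc from `a` to `b`, so that
`s ↦ cos s • a + sin s • scCenter a b` parametrises that arc by arc length. -/
section scCenter

variable {a b : E3}

lemma inner_scCenter_left (ha : ‖a‖ = 1) (b : E3) : ⟪a, scCenter a b⟫_ℝ = 0 := by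
  rw [scCenter, real_inner_smul_right, inner_sub_right, real_inner_smul_right,
    real_inner_self_eq_norm_sq, ha, real_inner_comm]
  ring

lemma norm_sub_inner_smul_eq_sin_sdist (ha : ‖a‖ = 1) (hb : ‖b‖ = 1) :
    ‖b - ⟪b, a⟫_ℝ • a‖ = sin (sdist a b) := by
  have hsq : ‖b - ⟪b, a⟫_ℝ • a‖ ^ 2 = 1 - ⟪a, b⟫_ℝ ^ 2 := by
    rw [norm_sub_sq_real, real_inner_smul_right, norm_smul, ha, hb, real_inner_comm a b,
      Real.norm_eq_abs]
    ring_nf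
    rw [sq_abs]
    ring
  rw [sdist, sin_arccos, ← hsq, Real.sqrt_sq (norm_nonneg _)]

lemma sin_sdist_smul_scCenter (ha : ‖a‖ = 1) (hb : ‖b‖ = 1) :
    sin (sdist a b) • scCenter a b = b - cos (sdist a b) • a := by
  rw [← norm_sub_inner_smul_eq_sin_sdist ha hb, cos_sdist ha hb, real_inner_comm b a, scCenter]
  rcases eq_or_ne ‖b - ⟪b, a⟫_ℝ • a‖ 0 with h | h
  · rw [h, zero_smul, norm_eq_zero.1 h]
  · exact smul_inv_smul₀ h _

lemma norm_scCenter (ha : ‖a‖ = 1) (hb : ‖b‖ = 1) (h₁ : b ≠ a) (h₂ : b ≠ -a) :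
    ‖scCenter a b‖ = 1 := by
  refine norm_smul_inv_norm fun h => (sin_sdist_pos ha hb h₁ h₂).ne' ?_
  rw [← norm_sub_inner_smul_eq_sin_sdist ha hb, h, norm_zero]

lemma inner_scCenter_right (ha : ‖a‖ = 1) (hb : ‖b‖ = 1) :
    ⟪scCenter a b, b⟫_ℝ = sin (sdist a b) := by
  have hvb : ⟪b - ⟪b, a⟫_ℝ • a, b⟫_ℝ = ‖b - ⟪b, a⟫_ℝ • a‖ ^ 2 := by
    rw [norm_sub_sq_real, inner_sub_left, real_inner_smul_left, real_inner_smul_right,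
      real_inner_self_eq_norm_sq, norm_smul, ha, hb, Real.norm_eq_abs, real_inner_comm a b]
    ring_nf
    rw [sq_abs]
    ring
  rw [scCenter, real_inner_smul_left, hvb, ← norm_sub_inner_smul_eq_sin_sdist ha hb]
  rcases eq_or_ne ‖b - ⟪b, a⟫_ℝ • a‖ 0 with h | h
  · simp [h]
  · field_simp

lemma scCenter_neg_right (a b : E3) : scCenter a (-b) = -scCenter a b := by
  have h : -b - ⟪-b, a⟫_ℝ • a = -(b - ⟪b, a⟫_ℝ • a) := by
    rw [inner_neg_left, neg_smul]; abel
  rw [scCenter, scCenter, h, norm_neg, smul_neg]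

lemma inner_scCenter_scCenter (ha : ‖a‖ = 1) (hb : ‖b‖ = 1) (h₁ : b ≠ a) (h₂ : b ≠ -a) :
    ⟪scCenter a b, scCenter b a⟫_ℝ = -⟪a, b⟫_ℝ := by
  have hs := sin_sdist_pos ha hb h₁ h₂
  have hsq : sin (sdist a b) ^ 2 = 1 - ⟪a, b⟫_ℝ ^ 2 := by
    rw [sin_sq, cos_sdist ha hb]
  have key : sin (sdist a b) ^ 2 * ⟪scCenter a b, scCenter b a⟫_ℝ =
      sin (sdist a b) ^ 2 * -⟪a, b⟫_ℝ := by
    calc sin (sdist a b) ^ 2 * ⟪scCenter a b, scCenter b a⟫_ℝ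
        = ⟪sin (sdist a b) • scCenter a b, sin (sdist b a) • scCenter b a⟫_ℝ := by
          rw [real_inner_smul_left, real_inner_smul_right, sdist_comm b a]; ring
      _ = ⟪b - ⟪a, b⟫_ℝ • a, a - ⟪a, b⟫_ℝ • b⟫_ℝ := by
          rw [sin_sdist_smul_scCenter ha hb, sin_sdist_smul_scCenter hb ha, cos_sdist ha hb,
            cos_sdist hb ha, real_inner_comm b a]
      _ = sin (sdist a b) ^ 2 * -⟪a, b⟫_ℝ := by
          rw [hsq]
          simp only [inner_sub_left, inner_sub_right, real_inner_smul_left,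
            real_inner_smul_right, real_inner_self_eq_norm_sq, ha, hb, real_inner_comm a b]
          ring
  exact mul_left_cancel₀ (pow_pos hs 2).ne' key

lemma luneTh_eq (ha : ‖a‖ = 1) (hb : ‖b‖ = 1) (h₁ : b ≠ a) (h₂ : b ≠ -a) :
    luneTh a b = π - sdist a b := by
  rw [luneTh, sdist, inner_scCenter_scCenter ha hb h₁ h₂, arccos_neg, sdist]

lemma sdist_scCenter_self (ha : ‖a‖ = 1) (hb : ‖b‖ = 1) (h : sdist a b ≤ π / 2) :
    sdist (scCenter a b) b = π / 2 - sdist a b := by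
  rw [sdist, inner_scCenter_right ha hb, ← cos_pi_div_two_sub]
  exact arccos_cos (by linarith) (by linarith [sdist_nonneg (a := a) (b := b), pi_pos])

lemma inner_neg_scCenter_self_neg (ha : ‖a‖ = 1) (hb : ‖b‖ = 1) (h₁ : b ≠ a)
    (h₂ : b ≠ -a) : ⟪-scCenter a b, b⟫_ℝ < 0 := by
  rw [inner_neg_left, inner_scCenter_right ha hb, neg_neg_iff_pos]
  exact sin_sdist_pos ha hb h₁ h₂

lemma isLunePair_neg_scCenter {c z : E3} (hc : ‖c‖ = 1) (hz : ‖z‖ = 1) (h₁ : c ≠ z)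
    (h₂ : c ≠ -z) (hzc : 0 < ⟪z, c⟫_ℝ) : IsLunePair c (-scCenter z c) := by
  refine ⟨mem_S2.2 hc, mem_S2.2 (by rw [norm_neg, norm_scCenter hz hc h₁ h₂]),
    fun h => hzc.ne' ?_, fun h => hzc.ne' ?_⟩
  · rw [h, inner_neg_right, inner_scCenter_left hz, neg_zero]
  · rw [h, neg_neg, inner_scCenter_left hz]

lemma luneTh_neg_scCenter {c z : E3} (hc : ‖c‖ = 1) (hz : ‖z‖ = 1) (h₁ : c ≠ z)
    (h₂ : c ≠ -z) (hzc : 0 < ⟪z, c⟫_ℝ) : luneTh c (-scCenter z c) = π / 2 - sdist z c := by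
  obtain ⟨-, hc', hne, hne'⟩ := isLunePair_neg_scCenter hc hz h₁ h₂ hzc
  rw [luneTh_eq hc (mem_S2.1 hc') (Ne.symm hne) fun h => hne' (by rw [h, neg_neg]),
    sdist_neg_right, sub_sub_cancel, sdist_comm,
    sdist_scCenter_self hz hc (sdist_le_pi_div_two_iff.2 hzc.le)]

end scCenter

section Geodesic

variable {a b e : E3}

lemma norm_cos_smul_add_sin_smul (ha : ‖a‖ = 1) (he : ‖e‖ = 1) (hae : ⟪a, e⟫_ℝ = 0) (s : ℝ) :
    ‖cos s • a + sin s • e‖ = 1 := by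
  have hsq : ‖cos s • a + sin s • e‖ ^ 2 = 1 := by
    rw [norm_add_sq_real, real_inner_smul_left, real_inner_smul_right, hae, norm_smul,
      norm_smul, ha, he, Real.norm_eq_abs, Real.norm_eq_abs, mul_pow, mul_pow, sq_abs, sq_abs]
    linear_combination sin_sq_add_cos_sq s
  exact (pow_eq_one_iff_of_nonneg (norm_nonneg _) two_ne_zero).1 hsq

lemma cos_smul_add_sin_smul_scCenter_mem_arc (ha : ‖a‖ = 1) (hb : ‖b‖ = 1) (h₁ : b ≠ a)
    (h₂ : b ≠ -a) {s : ℝ} (hs₀ : 0 ≤ s) (hs : s ≤ sdist a b) :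
    cos s • a + sin s • scCenter a b ∈ arc a b := by
  have hu := norm_scCenter ha hb h₁ h₂
  have hau := inner_scCenter_left ha b
  have hθ : sdist a b ≤ π := sdist_le_pi
  have h_left : sdist a (cos s • a + sin s • scCenter a b) = s := by
    rw [sdist, inner_add_right, real_inner_smul_right, real_inner_smul_right, hau,
      real_inner_self_eq_norm_sq, ha]
    simpa using arccos_cos hs₀ (hs.trans hθ)
  have h_right : sdist (cos s • a + sin s • scCenter a b) b = sdist a b - s := by
    rw [sdist, inner_add_left, real_inner_smul_left, real_inner_smul_left,
      inner_scCenter_right ha hb, ← cos_sdist ha hb, ← cos_sub, ← cos_neg, neg_sub]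
    exact arccos_cos (by linarith) (by linarith)
  refine ⟨mem_S2.2 (norm_cos_smul_add_sin_smul ha hu hau s), ?_⟩
  rw [h_left, h_right]
  ring

end Geodesic

namespace SphConvex

variable {A : Set E3} {a b q y z : E3}

lemma cos_smul_add_sin_smul_scCenter_mem (hA : SphConvex A) (ha : a ∈ A) (hb : b ∈ A)
    (hab : b ≠ a) {s : ℝ} (hs₀ : 0 ≤ s) (hs : s ≤ sdist a b) :
    cos s • a + sin s • scCenter a b ∈ A := by
  have hba : b ≠ -a := fun h => hA.2.1 a ha (h ▸ hb)
  exact hA.2.2 a ha b hb <| cos_smul_add_sin_smul_scCenter_mem_arc (mem_S2.1 (hA.1 ha))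
    (mem_S2.1 (hA.1 hb)) hab hba hs₀ hs

/-- `⟪q, ·⟫` restricted to the arc from `y` to `z` is maximal at `y`, so its derivative there is
nonpositive. -/
lemma inner_le_of_isMaxOn (hA : SphConvex A) (hy : y ∈ A)
    (hmax : IsMaxOn (fun z => ⟪q, z⟫_ℝ) A y) (hz : z ∈ A) :
    ⟪q, z⟫_ℝ ≤ ⟪y, z⟫_ℝ * ⟪q, y⟫_ℝ := by
  rcases eq_or_ne z y with rfl | hzy
  · rw [real_inner_self_eq_norm_sq, mem_S2.1 (hA.1 hy)]; simp
  have hy1 := mem_S2.1 (hA.1 hy)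
  have hz1 := mem_S2.1 (hA.1 hz)
  have hθ : 0 < sdist y z := by
    refine sdist_nonneg.lt_of_ne fun h => hzy ?_
    rw [eq_comm, sdist, arccos_eq_zero] at h
    exact ((inner_eq_one_iff_of_norm_eq_one hy1 hz1).1
      (le_antisymm (real_inner_le_one_of_norm_eq_one hy1 hz1) h)).symm
  let f : ℝ → ℝ := fun s => cos s * ⟪q, y⟫_ℝ + sin s * ⟪q, scCenter y z⟫_ℝ
  have hf : IsLocalMaxOn f (Set.Icc 0 (sdist y z)) 0 := by
    refine IsMaxOn.localize fun s hs => ?_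
    have hmem := hA.cos_smul_add_sin_smul_scCenter_mem hy hz hzy hs.1 hs.2
    simpa [f, inner_add_right, real_inner_smul_right] using hmax hmem
  have hderiv : HasDerivAt f ⟪q, scCenter y z⟫_ℝ 0 := by
    have := ((hasDerivAt_cos 0).mul_const ⟪q, y⟫_ℝ).add
      ((hasDerivAt_sin 0).mul_const ⟪q, scCenter y z⟫_ℝ)
    simp only [sin_zero, cos_zero, neg_zero, zero_mul, one_mul, zero_add] at this
    exact this
  have hcone : sdist y z ∈ posTangentConeAt (Set.Icc 0 (sdist y z)) 0 :=
    mem_posTangentConeAt_of_segment_subset (by rw [zero_add, segment_eq_Icc hθ.le])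
  have hqu : ⟪q, scCenter y z⟫_ℝ ≤ 0 := by
    refine nonpos_of_mul_nonpos_right ?_ hθ
    simpa [mul_comm] using
      hf.hasFDerivWithinAt_nonpos hderiv.hasDerivWithinAt.hasFDerivWithinAt hcone
  have key : ⟪q, sin (sdist y z) • scCenter y z⟫_ℝ ≤ 0 := by
    rw [real_inner_smul_right]
    exact mul_nonpos_of_nonneg_of_nonpos (sin_nonneg_of_nonneg_of_le_pi hθ.le sdist_le_pi) hqu
  rw [sin_sdist_smul_scCenter hy1 hz1, cos_sdist hy1 hz1, inner_sub_right,
    real_inner_smul_right] at key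
  linarith

lemma supportsAt_neg_scCenter (hA : SphConvex A) (hq : ‖q‖ = 1) (hy : y ∈ A)
    (hmax : IsMaxOn (fun z => ⟪q, z⟫_ℝ) A y) (h₁ : q ≠ y) (h₂ : q ≠ -y) :
    SupportsAt (-scCenter y q) A y := by
  have hy1 := mem_S2.1 (hA.1 hy)
  have hsin := sin_sdist_pos hy1 hq h₁ h₂
  refine ⟨mem_S2.2 (by rw [norm_neg, norm_scCenter hy1 hq h₁ h₂]), fun z hz => ?_, hy, ?_⟩
  · refine mem_hemi_iff.2 ⟨hA.1 hz, ?_⟩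
    have key : ⟪sin (sdist y q) • scCenter y q, z⟫_ℝ ≤ 0 := by
      rw [sin_sdist_smul_scCenter hy1 hq, cos_sdist hy1 hq, inner_sub_left,
        real_inner_smul_left, real_inner_comm q y]
      linarith [hA.inner_le_of_isMaxOn hy hmax hz]
    rw [real_inner_smul_left] at key
    rw [inner_neg_left, neg_nonneg]
    exact nonpos_of_mul_nonpos_right key hsin
  · rw [sdist_eq_pi_div_two_iff, inner_neg_left, real_inner_comm, inner_scCenter_left hy1,
      neg_zero]

end SphConvex

lemma SupportsAt.supports {c p : E3} {A : Set E3} (h : SupportsAt c A p) : Supports c A :=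
  ⟨h.1, h.2.1, p, h.2.2⟩

lemma exists_isMaxOn_inner {A : Set E3} (hcl : IsClosed A) (hA : A ⊆ S2) (hne : A.Nonempty)
    (q : E3) : ∃ y ∈ A, IsMaxOn (fun z => ⟪q, z⟫_ℝ) A y :=
  ((isCompact_sphere 0 1).of_isClosed_subset hcl hA).exists_isMaxOn hne
    (continuous_const.inner continuous_id).continuousOn

lemma exists_supportsAt_of_notMem {A : Set E3} (hcl : IsClosed A) (hA : SphConvex A)
    (hnt : A.Nontrivial) {q : E3} (hq : q ∈ S2) (hqA : q ∉ A) :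
    ∃ y ∈ A, IsMaxOn (fun z => ⟪q, z⟫_ℝ) A y ∧ q ≠ y ∧ q ≠ -y ∧
      SupportsAt (-scCenter y q) A y := by
  have hq1 := mem_S2.1 hq
  obtain ⟨y, hy, hmax⟩ := exists_isMaxOn_inner hcl hA.1 hnt.nonempty q
  have h₁ : q ≠ y := fun h => hqA (h ▸ hy)
  have h₂ : q ≠ -y := by
    intro hqy
    refine hnt.not_subset_singleton (x := y) fun z hz => ?_
    have hz1 := mem_S2.1 (hA.1 hz)
    have hle : ⟪q, z⟫_ℝ ≤ -1 := by
      simpa [hqy, real_inner_self_eq_norm_sq, mem_S2.1 (hA.1 hy)] using hmax hz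
    have hqz := (inner_eq_neg_one_iff_of_norm_eq_one hq1 hz1).1
      (le_antisymm hle (neg_one_le_real_inner_of_norm_eq_one hq1 hz1))
    exact neg_injective (hqz.symm.trans hqy)
  exact ⟨y, hy, hmax, h₁, h₂, hA.supportsAt_neg_scCenter hq1 hy hmax h₁ h₂⟩

section Width

variable {A : Set E3}

lemma luneTh_nonneg (g h : E3) : 0 ≤ luneTh g h := arccos_nonneg _

lemma widthAt_nonneg (c : E3) (A : Set E3) : 0 ≤ widthAt c A :=
  Real.sInf_nonneg <| by rintro _ ⟨c', -, -, rfl⟩; exact luneTh_nonneg c c'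

lemma widthAt_le_luneTh {c c' : E3} (hc' : Supports c' A) (h : IsLunePair c c') :
    widthAt c A ≤ luneTh c c' :=
  csInf_le ⟨0, by rintro _ ⟨c'', -, -, rfl⟩; exact luneTh_nonneg c c''⟩ ⟨c', hc', h, rfl⟩

lemma thickness_le_widthAt {c : E3} (hc : Supports c A) : thickness A ≤ widthAt c A :=
  csInf_le ⟨0, by rintro _ ⟨c', -, rfl⟩; exact widthAt_nonneg c' A⟩ ⟨c, hc, rfl⟩

lemma thickness_eq_of_constWidth {w : ℝ} {c : E3} (hw : ConstWidth A w) (hc : Supports c A) :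
    thickness A = w := by
  have h : {t | ∃ c, Supports c A ∧ t = widthAt c A} = {w} := by
    ext t
    constructor
    · rintro ⟨c', hc', rfl⟩
      exact hw c' hc'
    · rintro rfl
      exact ⟨c, hc, (hw c hc).symm⟩
  rw [thickness, h, csInf_singleton]

lemma exists_supports (hcl : IsClosed A) (hA : SphConvex A) (hnt : A.Nontrivial) :
    ∃ c, Supports c A := by
  obtain ⟨p, hp⟩ := hnt.nonempty
  obtain ⟨y, -, -, -, -, hy⟩ :=
    exists_supportsAt_of_notMem hcl hA hnt (neg_mem_S2 (hA.1 hp)) (hA.2.1 p hp)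
  exact ⟨_, hy.supports⟩

/-- A second supporting hemisphere, through the point of `A` nearest to the antipode of a point
of `A` on the boundary of `hemi m`. -/
lemma exists_isLunePair_supports (hcl : IsClosed A) (hA : SphConvex A) (hnt : A.Nontrivial)
    {m : E3} (hm : Supports m A) : ∃ c, Supports c A ∧ IsLunePair m c := by
  obtain ⟨p, hp, hmp⟩ := hm.2.2
  rw [sdist_eq_pi_div_two_iff] at hmp
  have hp' := neg_mem_S2 (hA.1 hp)
  obtain ⟨y, hy, -, h₁, h₂, hc⟩ := exists_supportsAt_of_notMem hcl hA hnt hp' (hA.2.1 p hp)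
  have hneg := inner_neg_scCenter_self_neg (mem_S2.1 (hA.1 hy)) (mem_S2.1 hp') h₁ h₂
  refine ⟨_, hc.supports, hm.1, hc.1, fun h => ?_, fun h => ?_⟩
  · rw [← h, inner_neg_right, hmp, neg_zero] at hneg
    exact hneg.false
  · rw [← neg_eq_iff_eq_neg.2 h, inner_neg_neg, hmp] at hneg
    exact hneg.false

lemma pi_div_two_sub_sdist_le_widthAt (hcl : IsClosed A) (hA : SphConvex A)
    (hnt : A.Nontrivial) {m x : E3} (hm : Supports m A) (hx : x ∈ A) :
    π / 2 - sdist m x ≤ widthAt m A := by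
  obtain ⟨c, hc, hmc⟩ := exists_isLunePair_supports hcl hA hnt hm
  refine le_csInf ⟨_, c, hc, hmc, rfl⟩ ?_
  rintro _ ⟨c', hc', ⟨hm1, hc'1, hne, hne'⟩, rfl⟩
  rw [mem_S2] at hm1 hc'1
  rw [luneTh_eq hm1 hc'1 (Ne.symm hne) fun h => hne' (by rw [h, neg_neg])]
  have htri := sdist_triangle hm1 (mem_S2.1 (hA.1 hx)) hc'1
  have hxc' : sdist c' x ≤ π / 2 := (hc'.2.1 hx).2
  rw [sdist_comm x c'] at htri
  linarith

end Width

lemma sdist_le_of_constWidth {A : Set E3} {w : ℝ} (hcl : IsClosed A) (hA : SphConvex A)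
    (hnt : A.Nontrivial) (hw : ConstWidth A w) (hlt : w < π / 2) {q u : E3} (hq : q ∈ A)
    (hu : u ∈ A) : sdist q u ≤ w := by
  have hq1 := mem_S2.1 (hA.1 hq)
  obtain ⟨p, hp, hmax, h₁, h₂, hm⟩ :=
    exists_supportsAt_of_notMem hcl hA hnt (neg_mem_S2 (hA.1 hq)) (hA.2.1 q hq)
  rw [scCenter_neg_right, neg_neg] at hm
  have hp1 := mem_S2.1 (hA.1 hp)
  have hwm := hw _ hm.supports
  have hfar : sdist q u ≤ sdist q p := by
    refine arccos_le_arccos ?_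
    have := hmax hu
    simp only [inner_neg_left, neg_le_neg_iff] at this
    exact this
  refine hfar.trans ?_
  rw [sdist_comm]
  rcases le_or_gt (sdist p q) (π / 2) with hθ | hθ
  · have := pi_div_two_sub_sdist_le_widthAt hcl hA hnt hm.supports hq
    rw [sdist_scCenter_self hp1 hq1 hθ, hwm] at this
    linarith
  · have hqp : q ≠ p := fun h => h₂ (by rw [h])
    have hmA : scCenter p q ∈ A := by
      simpa using hA.cos_smul_add_sin_smul_scCenter_mem hp hq hqp (by positivity) hθ.le
    have := pi_div_two_sub_sdist_le_widthAt hcl hA hnt hm.supports hmA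
    rw [sdist_self (norm_scCenter hp1 hq1 hqp fun h => h₁ (by rw [h, neg_neg])), hwm] at this
    linarith

lemma exists_norm_eq_one_inner_eq_zero (p : E3) : ∃ e : E3, ‖e‖ = 1 ∧ ⟪p, e⟫_ℝ = 0 := by
  have hne : (ℝ ∙ p)ᗮ ≠ ⊥ := by
    intro h
    have hdim := Submodule.finrank_add_finrank_orthogonal (ℝ ∙ p)
    rw [h, finrank_bot, finrank_euclideanSpace_fin] at hdim
    have hle := finrank_span_le_card (R := ℝ) ({p} : Set E3)
    rw [Set.toFinset_singleton, Finset.card_singleton] at hle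
    omega
  obtain ⟨v, hv, hv0⟩ := Submodule.exists_mem_ne_zero_of_ne_bot hne
  refine ⟨‖v‖⁻¹ • v, norm_smul_inv_norm hv0, ?_⟩
  rw [real_inner_smul_right, Submodule.mem_orthogonal_singleton_iff_inner_right.1 hv, mul_zero]

lemma exists_mem_inner_pos_of_ball_subset {A : Set E3} {p e : E3} {r : ℝ} (hr : 0 < r)
    (hball : Metric.ball p r ∩ S2 ⊆ A) (hp : ‖p‖ = 1) (he : ‖e‖ = 1) (hpe : ⟪p, e⟫_ℝ = 0) :
    ∃ z ∈ A, 0 < ⟪e, z⟫_ℝ := by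
  set s := min (r / 2) 1
  have hs : 0 < s := lt_min (half_pos hr) one_pos
  have hsr : s < r := (min_le_left _ _).trans_lt (half_lt_self hr)
  have hdist : ‖cos s • p + sin s • e - p‖ < r := by
    have hsq : ‖cos s • p + sin s • e - p‖ ^ 2 = 2 - 2 * cos s := by
      rw [show cos s • p + sin s • e - p = (cos s - 1) • p + sin s • e by module,
        norm_add_sq_real, real_inner_smul_left, real_inner_smul_right, hpe, norm_smul,
        norm_smul, hp, he, Real.norm_eq_abs, Real.norm_eq_abs, mul_pow, mul_pow, sq_abs, sq_abs]
      linear_combination sin_sq_add_cos_sq s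
    refine lt_of_pow_lt_pow_left₀ 2 hr.le ?_
    nlinarith [one_sub_sq_div_two_le_cos (x := s)]
  refine ⟨cos s • p + sin s • e,
    hball ⟨?_, mem_S2.2 (norm_cos_smul_add_sin_smul hp he hpe s)⟩, ?_⟩
  · rwa [Metric.mem_ball, dist_eq_norm]
  · rw [inner_add_right, real_inner_smul_right, real_inner_smul_right, real_inner_comm, hpe,
      real_inner_self_eq_norm_sq, he]
    have : 0 < sin s :=
      sin_pos_of_pos_of_lt_pi hs ((min_le_right _ _).trans_lt (by linarith [pi_gt_three]))
    simpa using this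

lemma nontrivial_of_relIntNonempty {A : Set E3} (h : relIntNonempty A) : A.Nontrivial := by
  obtain ⟨p, hp, r, hr, hball⟩ := h
  obtain ⟨e, he, hpe⟩ := exists_norm_eq_one_inner_eq_zero p
  obtain ⟨z, hz, hez⟩ := exists_mem_inner_pos_of_ball_subset hr hball (mem_S2.1 hp) he hpe
  refine ⟨z, hz, p, hball ⟨Metric.mem_ball_self hr, hp⟩, fun hzp => ?_⟩
  rw [hzp, real_inner_comm, hpe] at hez
  exact hez.false

lemma exists_inner_pos_of_subset_hemi {A : Set E3} {c : E3} (h : relIntNonempty A)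
    (hc : ‖c‖ = 1) (hsub : A ⊆ hemi c) : ∃ z ∈ A, 0 < ⟪c, z⟫_ℝ := by
  obtain ⟨p, hp, r, hr, hball⟩ := h
  have hpA := hball ⟨Metric.mem_ball_self hr, hp⟩
  rcases (mem_hemi_iff.1 (hsub hpA)).2.lt_or_eq with hcp | hcp
  · exact ⟨p, hpA, hcp⟩
  · rw [real_inner_comm] at hcp
    exact exists_mem_inner_pos_of_ball_subset hr hball (mem_S2.1 hp) hc hcp.symm

lemma exists_widthAt_lt_of_notMem {W Z : Set E3} {w : ℝ} (hZcl : IsClosed Z)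
    (hZ : SphConvex Z) (hZint : relIntNonempty Z) (hZW : Z ⊆ W)
    (hdiam : ∀ a ∈ W, ∀ b ∈ W, sdist a b ≤ w) (hlt : w < π / 2) {x : E3} (hx : x ∈ S2)
    (hxW : x ∈ W) (hxZ : x ∉ Z) :
    ∃ c, Supports c Z ∧ widthAt c Z < w := by
  have hnt := nontrivial_of_relIntNonempty hZint
  obtain ⟨y, hy, -, hxy, hxy', hc⟩ := exists_supportsAt_of_notMem hZcl hZ hnt hx hxZ
  set c := -scCenter y x
  have hc1 := mem_S2.1 hc.1
  have hcx : π / 2 < sdist c x := pi_div_two_lt_sdist_iff.2 <|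
    inner_neg_scCenter_self_neg (mem_S2.1 (hZ.1 hy)) (mem_S2.1 hx) hxy hxy'
  have hcZ : c ∉ Z := fun hcZ => by
    have := hdiam c (hZW hcZ) y (hZW hy)
    rw [hc.2.2.2] at this
    linarith
  obtain ⟨z, hz, hzmax, hcz, hcz', hc'⟩ := exists_supportsAt_of_notMem hZcl hZ hnt hc.1 hcZ
  have hz1 := mem_S2.1 (hZ.1 hz)
  obtain ⟨z₀, hz₀, hcz₀⟩ := exists_inner_pos_of_subset_hemi hZint hc1 hc.2.1
  have hzc : 0 < ⟪z, c⟫_ℝ := by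
    rw [real_inner_comm]
    exact hcz₀.trans_le (hzmax hz₀)
  have htri := sdist_triangle hc1 hz1 (mem_S2.1 hx)
  have hzx := hdiam z (hZW hz) x hxW
  rw [sdist_comm c z] at htri
  refine ⟨c, hc.supports, (widthAt_le_luneTh hc'.supports
    (isLunePair_neg_scCenter hc1 hz1 hcz hcz' hzc)).trans_lt ?_⟩
  rw [luneTh_neg_scCenter hc1 hz1 hcz hcz' hzc]
  linarith

/-- every spherical body of constant width w < π/2 is reduced. -/
theorem constWidth_reduced (W : Set E3) (w : ℝ) (hW : SphConvexBody W)
    (hw : ConstWidth W w) (hlt : w < Real.pi / 2) : Reduced W := by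
  obtain ⟨hcl, hconv, hint⟩ := hW
  have hnt := nontrivial_of_relIntNonempty hint
  obtain ⟨c₀, hc₀⟩ := exists_supports hcl hconv hnt
  refine ⟨⟨hcl, hconv, hint⟩, fun Z ⟨hZcl, hZ, hZint⟩ hZW hZW' => ?_⟩
  obtain ⟨x, hxW, hxZ⟩ := Set.exists_of_ssubset (hZW.ssubset_of_ne hZW')
  obtain ⟨c, hc, hcw⟩ := exists_widthAt_lt_of_notMem hZcl hZ hZint hZW
    (fun a ha b hb => sdist_le_of_constWidth hcl hconv hnt hw hlt ha hb) hlt (hconv.1 hxW)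
    hxW hxZ
  rw [thickness_eq_of_constWidth hw hc₀]
  exact (thickness_le_widthAt hc).trans_lt hcw

end
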